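/- There exist disjoint computably enumerable sets X, Y ⊆ ℕ that are computably inseparable: there is no computable set S with X ⊆ S and Y ⊆ ℕ \ S. -/

import Mathlib

/-!
Let `φₙ` be the `n`-th partial recursive function and take `X = {n | φₙ(n) = 0}`,
`Y = {n | φₙ(n) = 1}`. If a computable `g` separated them, the computable function
`n ↦ if g n then 1 else 0` would have an index `e`; then `φₑ(e) = 1` puts `e` in `Y` if `g e` is
true, and `φₑ(e) = 0` puts `e` in `X` otherwise, so `g` misclassifies `e` either way.
-/

open Nat.Partrec (Code)
open Nat.Partrec.Code

noncomputable def diagonal (n : ℕ) : Part ℕ :=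
  eval (Denumerable.ofNat Code n) n

theorem diagonal_partrec : Partrec diagonal :=
  eval_part.comp (Computable.ofNat Code) Computable.id

theorem exists_diagonal_eq {f : ℕ →. ℕ} (hf : Partrec f) : ∃ e, diagonal e = f e := by
  obtain ⟨c, hc⟩ := exists_code.1 (Partrec.nat_iff.1 hf)
  exact ⟨Encodable.encode c, by rw [diagonal, Denumerable.ofNat_encode, hc]⟩

theorem Partrec.exists_dom_eq_fiber {f : ℕ →. ℕ} (hf : Partrec f) (b : ℕ) :
    ∃ g : ℕ →. ℕ, Nat.Partrec g ∧ {n | b ∈ f n} = {n | (g n).Dom} := by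
  refine ⟨fun n => (f n).bind fun v => bif v = b then Part.some 0 else Part.none,
    Partrec.nat_iff.1 (hf.bind (Partrec.cond
      (Primrec.eq.comp Primrec.snd (Primrec.const b)).decide.to_comp
      (Computable.const 0).partrec Partrec.none)), ?_⟩
  ext n
  simp only [Set.mem_ofPred_eq, Part.bind_dom]
  constructor
  · intro hb
    refine ⟨Part.dom_iff_mem.2 ⟨b, hb⟩, ?_⟩
    simp [Part.get_eq_of_mem hb]
  · rintro ⟨hdom, hget⟩
    by_cases hv : (f n).get hdom = b
    · exact hv ▸ Part.get_mem hdom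
    · simp [hv] at hget

theorem not_computable_separates_diagonal_fibers :
    ¬ ∃ g : ℕ → Bool, Computable g ∧
        {n | 0 ∈ diagonal n} ⊆ {n | g n = true} ∧ {n | 1 ∈ diagonal n} ⊆ {n | g n = false} := by
  rintro ⟨g, hg, hX, hY⟩
  obtain ⟨e, he⟩ := exists_diagonal_eq
    (Computable.cond hg (Computable.const 1) (Computable.const 0)).partrec
  cases hge : g e with
  | true => exact absurd (hY (show 1 ∈ diagonal e by simp [he, hge])) (by simp [hge])
  | false => exact absurd (hX (show 0 ∈ diagonal e by simp [he, hge])) (by simp [hge])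

/-- There exist disjoint computably enumerable sets `X, Y ⊆ ℕ` that are
computably inseparable: no computable set `S` satisfies `X ⊆ S` and
`Y ⊆ ℕ \ S`.  A set is c.e. if it is the domain of a partial computable
function, and computable if its characteristic function is computable. -/
theorem computably_inseparable_ce_sets :
    ∃ X Y : Set ℕ,
      (∃ f : ℕ →. ℕ, Nat.Partrec f ∧ X = {n | (f n).Dom}) ∧
      (∃ f : ℕ →. ℕ, Nat.Partrec f ∧ Y = {n | (f n).Dom}) ∧
      Disjoint X Y ∧
      ¬ ∃ g : ℕ → Bool, Computable g ∧
          X ⊆ {n | g n = true} ∧ Y ⊆ {n | g n = false} := by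
  refine ⟨{n | 0 ∈ diagonal n}, {n | 1 ∈ diagonal n}, diagonal_partrec.exists_dom_eq_fiber 0,
    diagonal_partrec.exists_dom_eq_fiber 1, ?_, not_computable_separates_diagonal_fibers⟩
  exact Set.disjoint_left.2 fun n h0 h1 => absurd (Part.mem_unique h0 h1) zero_ne_one
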